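/- Let χ₁, …, χₙ: ℝ → ℝ be one-dimensional functions each satisfying, with respect to the integer nodes t_j = j: (K1) χ_i ∈ L¹(ℝ) and χ_i bounded in a neighbourhood of 0; (K2) Σ_{j∈ℤ} χ_i(u − j) = 1 for every u ∈ ℝ; (K3) there exists β_i > 0 with sup_{u∈ℝ} Σ_{j∈ℤ} |χ_i(u − j)| · |u − j|^{β_i} < +∞. Then the product (tensor-product) function χ(x₁,…,xₙ) := Π_{i=1}^n χ_i(x_i) satisfies (K1), (K2) and (K3) on ℝⁿ with respect to the nodes t_k = k ∈ ℤⁿ; i.e., χ ∈ L¹(ℝⁿ) and is bounded near the origin, Σ_{k∈ℤⁿ} χ(u − k) = 1 for every u ∈ ℝⁿ, and there exists β > 0 with sup_{u∈ℝⁿ} Σ_{k∈ℤⁿ} |χ(u − k)| · ‖u − k‖₂^β < +∞. -/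

import Mathlib

open MeasureTheory
open scoped ENNReal NNReal

noncomputable section

/-- The integer nodes `t_k = k ∈ ℤⁿ` viewed in `ℝⁿ`. -/
def intNodes {n : ℕ} (k : Fin n → ℤ) : EuclideanSpace ℝ (Fin n) :=
  WithLp.toLp 2 (fun i => (k i : ℝ))

/-- The product (tensor-product) multivariate kernel `χ(x) = ∏_{i=1}^n χ_i(x_i)`. -/
def prodKernel {n : ℕ} (χs : Fin n → ℝ → ℝ) (x : EuclideanSpace ℝ (Fin n)) : ℝ :=
  ∏ i, χs i (x i)

section Helpers


/-- binary rpow subadditivity for nonneg reals and exponent in (0,1] -/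
lemma myRpowAddLe {β : ℝ} (hβ : 0 < β) (hβ1 : β ≤ 1) {a b : ℝ} (ha : 0 ≤ a) (hb : 0 ≤ b) :
    (a + b) ^ β ≤ a ^ β + b ^ β := by
  have h1 : (1 : ℝ) ≤ 1 / β := by
    rw [le_div_iff₀ hβ]; linarith
  have h := NNReal.rpow_add_rpow_le_add (p := 1 / β) (a.toNNReal ^ β) (b.toNNReal ^ β) h1
  have hb' : β ≠ 0 := hβ.ne'
  have e1 : (a.toNNReal ^ β) ^ (1 / β) = a.toNNReal := by
    rw [← NNReal.rpow_mul, mul_one_div_cancel hb', NNReal.rpow_one]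
  have e2 : (b.toNNReal ^ β) ^ (1 / β) = b.toNNReal := by
    rw [← NNReal.rpow_mul, mul_one_div_cancel hb', NNReal.rpow_one]
  rw [e1, e2, one_div_one_div] at h
  have := (NNReal.coe_le_coe).2 h
  simpa [NNReal.coe_rpow, Real.toNNReal_add ha hb, Real.coe_toNNReal _ ha,
    Real.coe_toNNReal _ hb] using this

lemma myRpowSumLe {ι : Type*} (s : Finset ι) (f : ι → ℝ) (hf : ∀ i ∈ s, 0 ≤ f i)
    {β : ℝ} (hβ : 0 < β) (hβ1 : β ≤ 1) :
    (∑ i ∈ s, f i) ^ β ≤ ∑ i ∈ s, f i ^ β := by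
  induction s using Finset.cons_induction with
  | empty => simp [Real.zero_rpow hβ.ne']
  | cons i s hi ih =>
    rw [Finset.sum_cons, Finset.sum_cons]
    have h1 : 0 ≤ f i := hf i (Finset.mem_cons_self _ _)
    have h2 : 0 ≤ ∑ j ∈ s, f j := Finset.sum_nonneg fun j hj => hf j (Finset.mem_cons_of_mem hj)
    refine (myRpowAddLe hβ hβ1 h1 h2).trans ?_
    gcongr
    exact ih fun j hj => hf j (Finset.mem_cons_of_mem hj)

lemma myEuclNormRpowLe {n : ℕ} (x : EuclideanSpace ℝ (Fin n)) {β : ℝ} (hβ : 0 < β) (hβ1 : β ≤ 1) :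
    ‖x‖ ^ β ≤ ∑ i, |x i| ^ β := by
  have h1 : ‖x‖ ≤ ∑ i, |x i| := by
    rw [EuclideanSpace.norm_eq]
    calc Real.sqrt (∑ i, ‖x i‖ ^ 2)
        ≤ Real.sqrt ((∑ i, |x i|) ^ 2) := by
          apply Real.sqrt_le_sqrt
          simp_rw [Real.norm_eq_abs]
          exact Finset.sum_sq_le_sq_sum_of_nonneg fun i _ => abs_nonneg _
      _ = ∑ i, |x i| := Real.sqrt_sq (Finset.sum_nonneg fun i _ => abs_nonneg _)
  calc ‖x‖ ^ β ≤ (∑ i, |x i|) ^ β := Real.rpow_le_rpow (norm_nonneg _) h1 hβ.le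
    _ ≤ _ := myRpowSumLe _ _ (fun i _ => abs_nonneg _) hβ hβ1

lemma myOfRealProd {ι : Type*} (s : Finset ι) (f : ι → ℝ) (hf : ∀ i ∈ s, 0 ≤ f i) :
    ENNReal.ofReal (∏ i ∈ s, f i) = ∏ i ∈ s, ENNReal.ofReal (f i) := by
  induction s using Finset.cons_induction with
  | empty => simp
  | cons i s hi ih =>
    rw [Finset.prod_cons, Finset.prod_cons,
      ENNReal.ofReal_mul (hf i (Finset.mem_cons_self _ _)),
      ih fun j hj => hf j (Finset.mem_cons_of_mem hj)]

lemma myENNRealTsumPiProd : ∀ {n : ℕ} (f : Fin n → ℤ → ℝ≥0∞),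
    ∑' k : Fin n → ℤ, ∏ i, f i (k i) = ∏ i, ∑' j : ℤ, f i j := by
  intro n
  induction n with
  | zero =>
    intro f
    haveI : Unique (Fin 0 → ℤ) := ⟨⟨fun i => i.elim0⟩, fun g => funext fun i => i.elim0⟩
    rw [tsum_eq_single (default : Fin 0 → ℤ)
      (fun b hb => absurd (Subsingleton.elim b default) hb)]
    simp
  | succ n ih =>
    intro f
    rw [← Equiv.tsum_eq (Fin.consEquiv (fun _ : Fin (n + 1) => ℤ)) (fun k => ∏ i, f i (k i))]
    have hpt : ∀ p : ℤ × (Fin n → ℤ),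
        (∏ i, f i ((Fin.consEquiv (fun _ : Fin (n + 1) => ℤ) p) i)) = f 0 p.1 * ∏ i : Fin n, f i.succ (p.2 i) := by
      intro p
      rw [Fin.prod_univ_succ]
      simp
    calc ∑' p : ℤ × (Fin n → ℤ), ∏ i, f i ((Fin.consEquiv (fun _ : Fin (n + 1) => ℤ) p) i)
        = ∑' p : ℤ × (Fin n → ℤ), f 0 p.1 * ∏ i : Fin n, f i.succ (p.2 i) := by
          exact tsum_congr hpt
      _ = ∑' j : ℤ, ∑' k : Fin n → ℤ, f 0 j * ∏ i : Fin n, f i.succ (k i) := by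
          rw [ENNReal.tsum_prod']
      _ = (∑' j : ℤ, f 0 j) * ∑' k : Fin n → ℤ, ∏ i : Fin n, f i.succ (k i) := by
          simp_rw [ENNReal.tsum_mul_left]
          rw [ENNReal.tsum_mul_right]
      _ = ∏ i, ∑' j : ℤ, f i j := by
          rw [ih fun i => f i.succ, Fin.prod_univ_succ]

lemma mySummablePiProdAbs : ∀ {n : ℕ} (f : Fin n → ℤ → ℝ),
    (∀ i, Summable fun j : ℤ => |f i j|) →
    Summable fun k : Fin n → ℤ => ∏ i, |f i (k i)| := by
  intro n
  induction n with
  | zero =>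
    intro f _
    haveI : Unique (Fin 0 → ℤ) := ⟨⟨fun i => i.elim0⟩, fun g => funext fun i => i.elim0⟩
    exact ⟨_, hasSum_fintype _⟩
  | succ n ih =>
    intro f hf
    have hpt : ∀ p : ℤ × (Fin n → ℤ),
        |f 0 p.1| * ∏ i : Fin n, |f i.succ (p.2 i)|
          = ∏ i, |f i ((Fin.consEquiv (fun _ : Fin (n + 1) => ℤ) p) i)| := by
      intro p
      rw [Fin.prod_univ_succ]
      simp
    have h1 : Summable fun j : ℤ => ‖(|f 0 j| : ℝ)‖ := by
      simpa [Real.norm_eq_abs, abs_abs] using hf 0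
    have h2 : Summable fun k : Fin n → ℤ => ‖∏ i : Fin n, |f i.succ (k i)|‖ := by
      simpa [Real.norm_eq_abs, Finset.abs_prod, abs_abs] using
        ih (fun i => f i.succ) (fun i => by simpa using hf i.succ)
    have hS0 := summable_mul_of_summable_norm h1 h2
    have hS : Summable (fun p : ℤ × (Fin n → ℤ) => |f 0 p.1| * ∏ i : Fin n, |f i.succ (p.2 i)|) :=
      hS0.congr fun p => rfl
    exact (Equiv.summable_iff (Fin.consEquiv (fun _ : Fin (n + 1) => ℤ))).1 (hS.congr hpt)

lemma myTsumPiProd : ∀ {n : ℕ} (f : Fin n → ℤ → ℝ),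
    (∀ i, Summable fun j : ℤ => |f i j|) →
    ∑' k : Fin n → ℤ, ∏ i, f i (k i) = ∏ i, ∑' j : ℤ, f i j := by
  intro n
  induction n with
  | zero =>
    intro f _
    haveI : Unique (Fin 0 → ℤ) := ⟨⟨fun i => i.elim0⟩, fun g => funext fun i => i.elim0⟩
    rw [tsum_eq_single (default : Fin 0 → ℤ)
      (fun b hb => absurd (Subsingleton.elim b default) hb)]
    simp
  | succ n ih =>
    intro f hf
    rw [← Equiv.tsum_eq (Fin.consEquiv (fun _ : Fin (n + 1) => ℤ)) (fun k => ∏ i, f i (k i))]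
    have hpt : ∀ p : ℤ × (Fin n → ℤ),
        (∏ i, f i ((Fin.consEquiv (fun _ : Fin (n + 1) => ℤ) p) i)) = f 0 p.1 * ∏ i : Fin n, f i.succ (p.2 i) := by
      intro p
      rw [Fin.prod_univ_succ]
      simp
    have hnorm1 : Summable fun j : ℤ => ‖f 0 j‖ := by simpa [Real.norm_eq_abs] using hf 0
    have hnorm2 : Summable fun k : Fin n → ℤ => ‖∏ i : Fin n, f i.succ (k i)‖ := by
      have := mySummablePiProdAbs (fun i => f i.succ) (fun i => by simpa using hf i.succ)
      refine this.congr fun k => ?_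
      rw [Real.norm_eq_abs, Finset.abs_prod]
    calc ∑' p : ℤ × (Fin n → ℤ), ∏ i, f i ((Fin.consEquiv (fun _ : Fin (n + 1) => ℤ) p) i)
        = ∑' p : ℤ × (Fin n → ℤ), f 0 p.1 * ∏ i : Fin n, f i.succ (p.2 i) := tsum_congr hpt
      _ = ∑' p : ℤ × (Fin n → ℤ),
            (fun j : ℤ => f 0 j) p.1 * (fun k : Fin n → ℤ => ∏ i : Fin n, f i.succ (k i)) p.2 :=
          tsum_congr fun p => rfl
      _ = (∑' j : ℤ, f 0 j) * ∑' k : Fin n → ℤ, ∏ i : Fin n, f i.succ (k i) :=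
          (tsum_mul_tsum_of_summable_norm hnorm1 hnorm2).symm
      _ = ∏ i, ∑' j : ℤ, f i j := by
          rw [ih (fun i => f i.succ) (fun i => by simpa using hf i.succ), Fin.prod_univ_succ]


lemma myOneDimBound {χ : ℝ → ℝ} {β ε M B : ℝ} (hβ : 0 < β) (hε : 0 < ε)
    (hM : ∀ x : ℝ, |x| < ε → |χ x| ≤ M)
    (hsum : ∀ u : ℝ, Summable fun j : ℤ => |χ (u - j)| * |u - j| ^ β)
    (hB : ∀ u : ℝ, (∑' j : ℤ, |χ (u - j)| * |u - j| ^ β) ≤ B) :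
    ∃ T : ℝ≥0∞, T ≠ ⊤ ∧ ∀ u : ℝ,
      ∑' j : ℤ, ENNReal.ofReal (|χ (u - j)| * (1 + |u - j| ^ β)) ≤ T := by
  have hβ' := hβ.le
  have hterm : ∀ x : ℝ, |χ x| * |x| ^ β ≤ B := by
    intro x
    have h := Summable.le_tsum (hsum x) 0
      (fun j _ => mul_nonneg (abs_nonneg _) (Real.rpow_nonneg (abs_nonneg _) _))
    simpa using h.trans (hB x)
  set C := max M (B / ε ^ β) with hCdef
  have hC : ∀ x : ℝ, |χ x| ≤ C := by
    intro x
    rcases lt_or_ge (|x|) ε with h | h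
    · exact (hM x h).trans (le_max_left _ _)
    · refine le_trans ?_ (le_max_right _ _)
      rw [le_div_iff₀ (Real.rpow_pos_of_pos hε β)]
      calc |χ x| * ε ^ β ≤ |χ x| * |x| ^ β := by
            exact mul_le_mul_of_nonneg_left (Real.rpow_le_rpow hε.le h hβ') (abs_nonneg _)
        _ ≤ B := hterm x
  have hC0 : 0 ≤ C := (abs_nonneg _).trans (hC 0)
  have hB0 : 0 ≤ B := by
    refine le_trans ?_ (hB 0)
    exact tsum_nonneg fun j => mul_nonneg (abs_nonneg _) (Real.rpow_nonneg (abs_nonneg _) _)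
  refine ⟨ENNReal.ofReal (2 * C) + ENNReal.ofReal (2 * C) + ENNReal.ofReal (2 * B),
    by finiteness, ?_⟩
  intro u
  have hpt : ∀ j : ℤ, ENNReal.ofReal (|χ (u - j)| * (1 + |u - j| ^ β)) ≤
      ((if j = ⌊u⌋ then ENNReal.ofReal (2 * C) else 0)
        + (if j = ⌊u⌋ + 1 then ENNReal.ofReal (2 * C) else 0))
        + ENNReal.ofReal (2 * (|χ (u - j)| * |u - j| ^ β)) := by
    intro j
    rcases lt_or_ge (|u - (j : ℝ)|) 1 with h1 | h1
    · have hj : j = ⌊u⌋ ∨ j = ⌊u⌋ + 1 := by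
        rw [abs_lt] at h1
        obtain ⟨h1a, h1b⟩ := h1
        have h2 : (⌊u⌋ : ℝ) ≤ u := Int.floor_le u
        have h3 : u < (⌊u⌋ : ℝ) + 1 := Int.lt_floor_add_one u
        have h4 : ((⌊u⌋ - 1 : ℤ) : ℝ) < (j : ℝ) := by push_cast; linarith
        have h5 : (j : ℝ) < ((⌊u⌋ + 2 : ℤ) : ℝ) := by push_cast; linarith
        have h4' : ⌊u⌋ - 1 < j := by exact_mod_cast h4
        have h5' : j < ⌊u⌋ + 2 := by exact_mod_cast h5
        omega
      have h4 : |u - (j : ℝ)| ^ β ≤ 1 := Real.rpow_le_one (abs_nonneg _) h1.le hβ'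
      have hle : |χ (u - j)| * (1 + |u - j| ^ β) ≤ 2 * C := by
        calc |χ (u - j)| * (1 + |u - j| ^ β) ≤ C * (1 + 1) :=
              mul_le_mul (hC _) (by linarith) (by positivity) hC0
          _ = 2 * C := by ring
      refine le_trans (ENNReal.ofReal_le_ofReal hle) ?_
      rcases hj with hj | hj
      · rw [if_pos hj]
        exact le_self_add.trans le_self_add
      · rw [if_pos hj]
        exact (le_add_self :
          ENNReal.ofReal (2 * C) ≤ _ + ENNReal.ofReal (2 * C)).trans le_self_add
    · have h4 : (1 : ℝ) ≤ |u - (j : ℝ)| ^ β := by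
        have h5 := Real.rpow_le_rpow_of_exponent_le h1 (show (0:ℝ) ≤ β from hβ')
        rwa [Real.rpow_zero] at h5
      have hle : |χ (u - j)| * (1 + |u - j| ^ β) ≤ 2 * (|χ (u - j)| * |u - j| ^ β) := by
        have h6 : (1 : ℝ) + |u - (j : ℝ)| ^ β ≤ 2 * |u - (j : ℝ)| ^ β := by linarith
        calc |χ (u - j)| * (1 + |u - j| ^ β) ≤ |χ (u - j)| * (2 * |u - j| ^ β) :=
              mul_le_mul_of_nonneg_left h6 (abs_nonneg _)
          _ = 2 * (|χ (u - j)| * |u - j| ^ β) := by ring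
      exact le_trans (ENNReal.ofReal_le_ofReal hle) le_add_self
  calc ∑' j : ℤ, ENNReal.ofReal (|χ (u - j)| * (1 + |u - j| ^ β))
      ≤ ∑' j : ℤ, (((if j = ⌊u⌋ then ENNReal.ofReal (2 * C) else 0)
          + (if j = ⌊u⌋ + 1 then ENNReal.ofReal (2 * C) else 0))
          + ENNReal.ofReal (2 * (|χ (u - j)| * |u - j| ^ β))) := ENNReal.tsum_le_tsum hpt
    _ = ((∑' j : ℤ, if j = ⌊u⌋ then ENNReal.ofReal (2 * C) else 0)
          + (∑' j : ℤ, if j = ⌊u⌋ + 1 then ENNReal.ofReal (2 * C) else 0))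
          + ∑' j : ℤ, ENNReal.ofReal (2 * (|χ (u - j)| * |u - j| ^ β)) := by
        rw [ENNReal.tsum_add, ENNReal.tsum_add]
    _ ≤ ENNReal.ofReal (2 * C) + ENNReal.ofReal (2 * C) + ENNReal.ofReal (2 * B) := by
        have e1 : (∑' j : ℤ, if j = ⌊u⌋ then ENNReal.ofReal (2 * C) else 0)
            = ENNReal.ofReal (2 * C) := tsum_ite_eq _ _
        have e2 : (∑' j : ℤ, if j = ⌊u⌋ + 1 then ENNReal.ofReal (2 * C) else 0)
            = ENNReal.ofReal (2 * C) := tsum_ite_eq _ _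
        have e3 : (∑' j : ℤ, ENNReal.ofReal (2 * (|χ (u - j)| * |u - j| ^ β)))
            ≤ ENNReal.ofReal (2 * B) := by
          rw [← ENNReal.ofReal_tsum_of_nonneg (fun j => by positivity) ((hsum u).mul_left 2)]
          apply ENNReal.ofReal_le_ofReal
          rw [tsum_mul_left]
          exact mul_le_mul_of_nonneg_left (hB u) (by norm_num)
        rw [e1, e2]
        exact add_le_add le_rfl e3

end Helpers

/-- If each one-dimensional `χ_i` satisfies (K1)–(K3) with respect to the integer nodes,
then the product function `χ(x) = ∏ χ_i(x_i)` satisfies (K1)–(K3) on `ℝⁿ` with respect to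
the nodes `t_k = k ∈ ℤⁿ`. -/
theorem prodKernel_isKernel {n : ℕ} (χs : Fin n → ℝ → ℝ)
    (hK1_int : ∀ i, Integrable (χs i))
    (hK1_bdd : ∀ i, ∃ ε > (0 : ℝ), ∃ M : ℝ, ∀ x : ℝ, |x| < ε → |χs i x| ≤ M)
    (hK2 : ∀ i, ∀ u : ℝ, ∑' j : ℤ, χs i (u - j) = 1)
    (hK3 : ∀ i, ∃ β > (0 : ℝ),
      (∀ u : ℝ, Summable fun j : ℤ => |χs i (u - j)| * |u - j| ^ β) ∧
        ∃ M : ℝ, ∀ u : ℝ, (∑' j : ℤ, |χs i (u - j)| * |u - j| ^ β) ≤ M) :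
    Integrable (prodKernel χs) ∧
      (∃ ε > (0 : ℝ), ∃ M : ℝ,
        ∀ x : EuclideanSpace ℝ (Fin n), ‖x‖ < ε → |prodKernel χs x| ≤ M) ∧
      (∀ u : EuclideanSpace ℝ (Fin n),
        ∑' k : Fin n → ℤ, prodKernel χs (u - intNodes k) = 1) ∧
      ∃ β > (0 : ℝ),
        (∀ u : EuclideanSpace ℝ (Fin n),
          Summable fun k : Fin n → ℤ =>
            |prodKernel χs (u - intNodes k)| * ‖u - intNodes k‖ ^ β) ∧
          ∃ M : ℝ, ∀ u : EuclideanSpace ℝ (Fin n),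
            (∑' k : Fin n → ℤ,
              |prodKernel χs (u - intNodes k)| * ‖u - intNodes k‖ ^ β) ≤ M := by
  classical
  choose εs hεpos Ms hMs using hK1_bdd
  choose βs hβpos hsum Bs hBs using hK3
  -- (K1): integrability
  have hInt : Integrable (prodKernel χs) := by
    have h1 : Integrable (fun x : Fin n → ℝ => ∏ i, χs i (x i)) :=
      Integrable.fintype_prod hK1_int
    have h2 := ((EuclideanSpace.volume_preserving_symm_measurableEquiv_toLp (Fin n)).integrable_comp_emb
      (MeasurableEquiv.toLp 2 (Fin n → ℝ)).symm.measurableEmbedding).2 h1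
    exact h2
  -- (K1): boundedness near zero
  have hcoord : ∀ (x : EuclideanSpace ℝ (Fin n)) (i : Fin n), |x i| ≤ ‖x‖ := by
    intro x i
    rw [EuclideanSpace.norm_eq]
    calc |x i| = Real.sqrt (‖x i‖ ^ 2) := by
          rw [Real.norm_eq_abs, Real.sqrt_sq_eq_abs, abs_abs]
      _ ≤ Real.sqrt (∑ j, ‖x j‖ ^ 2) := by
          apply Real.sqrt_le_sqrt
          exact Finset.single_le_sum (f := fun j => ‖x j‖ ^ 2)
            (fun j _ => sq_nonneg _) (Finset.mem_univ i)
  have hbdd : ∃ ε > (0 : ℝ), ∃ M : ℝ,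
      ∀ x : EuclideanSpace ℝ (Fin n), ‖x‖ < ε → |prodKernel χs x| ≤ M := by
    refine ⟨Finset.univ.fold min 1 εs, ?_, ∏ i, Ms i, ?_⟩
    · by_contra h
      push_neg at h
      rcases (Finset.fold_min_le (0:ℝ)).1 h with h1 | ⟨i, _, h2⟩
      · linarith
      · exact absurd h2 (not_le.2 (hεpos i))
    · intro x hx
      have hMs0 : ∀ i, 0 ≤ Ms i :=
        fun i => (abs_nonneg _).trans (hMs i 0 (by simpa using hεpos i))
      have hxi : ∀ i, |x i| < εs i := by
        intro i
        have h2 : Finset.univ.fold min 1 εs ≤ εs i :=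
          ((Finset.le_fold_min _).1 le_rfl).2 i (Finset.mem_univ i)
        exact lt_of_le_of_lt (hcoord x i) (lt_of_lt_of_le hx h2)
      rw [prodKernel, Finset.abs_prod]
      exact Finset.prod_le_prod (fun i _ => abs_nonneg _) (fun i _ => hMs i _ (hxi i))
  -- (K2)
  have hK2' : ∀ u : EuclideanSpace ℝ (Fin n),
      ∑' k : Fin n → ℤ, prodKernel χs (u - intNodes k) = 1 := by
    intro u
    have hsummable : ∀ i, Summable fun j : ℤ => |χs i (u i - j)| := by
      intro i
      rw [summable_abs_iff]
      by_contra h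
      have h0 := tsum_eq_zero_of_not_summable h
      rw [hK2 i (u i)] at h0
      exact one_ne_zero h0
    calc ∑' k : Fin n → ℤ, prodKernel χs (u - intNodes k)
        = ∑' k : Fin n → ℤ, ∏ i, χs i (u i - k i) := tsum_congr fun k => by simp [prodKernel, intNodes]
      _ = ∏ i, ∑' j : ℤ, χs i (u i - j) := myTsumPiProd (fun i j => χs i (u i - j)) hsummable
      _ = 1 := Finset.prod_eq_one fun i _ => hK2 i (u i)
  -- (K3)
  have hT := fun i => myOneDimBound (hβpos i) (hεpos i) (hMs i) (hsum i) (hBs i)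
  choose Ts hTne hTs using hT
  set β : ℝ := Finset.univ.fold min 1 βs with hβdef
  have hβpos' : 0 < β := by
    by_contra h
    push_neg at h
    rcases (Finset.fold_min_le (0:ℝ)).1 h with h1 | ⟨i, _, h2⟩
    · linarith
    · exact absurd h2 (not_le.2 (hβpos i))
  have hβle1 : β ≤ 1 := ((Finset.le_fold_min _).1 le_rfl).1
  have hβlei : ∀ i, β ≤ βs i := fun i => ((Finset.le_fold_min _).1 le_rfl).2 i (Finset.mem_univ i)
  set c : Fin n → ℝ → ℝ := fun i x => |χs i x| * (1 + |x| ^ βs i) with hcdef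
  have hc_abs : ∀ i x, |χs i x| ≤ c i x := by
    intro i x
    have h1 : (1 : ℝ) ≤ 1 + |x| ^ βs i := by
      have := Real.rpow_nonneg (abs_nonneg x) (βs i); linarith
    calc |χs i x| = |χs i x| * 1 := (mul_one _).symm
      _ ≤ c i x := mul_le_mul_of_nonneg_left h1 (abs_nonneg _)
  have hc_rpow : ∀ i x, |χs i x| * |x| ^ β ≤ c i x := by
    intro i x
    have h2 : |x| ^ β ≤ 1 + |x| ^ βs i := by
      rcases le_or_gt (|x|) 1 with h | h
      · have h3 : |x| ^ β ≤ 1 := Real.rpow_le_one (abs_nonneg x) h hβpos'.le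
        have h4 := Real.rpow_nonneg (abs_nonneg x) (βs i)
        linarith
      · have h3 : |x| ^ β ≤ |x| ^ βs i :=
          Real.rpow_le_rpow_of_exponent_le h.le (hβlei i)
        linarith
    exact mul_le_mul_of_nonneg_left h2 (abs_nonneg _)
  have hc_nonneg : ∀ i x, 0 ≤ c i x := fun i x => (abs_nonneg _).trans (hc_abs i x)
  have hkey : ∀ (u : EuclideanSpace ℝ (Fin n)) (k : Fin n → ℤ),
      ENNReal.ofReal (|prodKernel χs (u - intNodes k)| * ‖u - intNodes k‖ ^ β)
        ≤ (n : ℝ≥0∞) * ∏ i, ENNReal.ofReal (c i (u i - k i)) := by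
    intro u k
    set v : EuclideanSpace ℝ (Fin n) := u - intNodes k with hv
    have hvi : ∀ i, v i = u i - (k i : ℝ) := fun i => by rw [hv]; simp [intNodes]
    have habs : |prodKernel χs v| = ∏ j, |χs j (v j)| := by
      rw [prodKernel, Finset.abs_prod]
    have hstep1 : |prodKernel χs v| * ‖v‖ ^ β ≤ ∑ i, ((∏ j, |χs j (v j)|) * |v i| ^ β) := by
      rw [habs, ← Finset.mul_sum]
      exact mul_le_mul_of_nonneg_left (myEuclNormRpowLe v hβpos' hβle1)
        (Finset.prod_nonneg fun j _ => abs_nonneg _)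
    have hstep2 : ∀ i : Fin n, (∏ j, |χs j (v j)|) * |v i| ^ β ≤ ∏ j, c j (v j) := by
      intro i
      have e1 : (∏ j, |χs j (v j)|) * |v i| ^ β
          = (|χs i (v i)| * |v i| ^ β) * ∏ j ∈ Finset.univ.erase i, |χs j (v j)| := by
        rw [← Finset.mul_prod_erase Finset.univ _ (Finset.mem_univ i)]
        ring
      rw [e1]
      calc (|χs i (v i)| * |v i| ^ β) * ∏ j ∈ Finset.univ.erase i, |χs j (v j)|
          ≤ c i (v i) * ∏ j ∈ Finset.univ.erase i, c j (v j) :=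
            mul_le_mul (hc_rpow i (v i))
              (Finset.prod_le_prod (fun j _ => abs_nonneg _) (fun j _ => hc_abs j (v j)))
              (Finset.prod_nonneg fun j _ => abs_nonneg _) (hc_nonneg i _)
        _ = ∏ j, c j (v j) := Finset.mul_prod_erase Finset.univ (fun j => c j (v j)) (Finset.mem_univ i)
    calc ENNReal.ofReal (|prodKernel χs v| * ‖v‖ ^ β)
        ≤ ENNReal.ofReal (∑ i, ((∏ j, |χs j (v j)|) * |v i| ^ β)) :=
          ENNReal.ofReal_le_ofReal hstep1
      _ ≤ ENNReal.ofReal (∑ _i : Fin n, ∏ j, c j (v j)) :=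
          ENNReal.ofReal_le_ofReal (Finset.sum_le_sum fun i _ => hstep2 i)
      _ = (n : ℝ≥0∞) * ∏ i, ENNReal.ofReal (c i (u i - k i)) := by
          rw [Finset.sum_const, Finset.card_univ, Fintype.card_fin, nsmul_eq_mul,
            ENNReal.ofReal_mul (by positivity), ENNReal.ofReal_natCast,
            myOfRealProd Finset.univ _ (fun j _ => hc_nonneg j (v j))]
          rfl
  set T : ℝ≥0∞ := (n : ℝ≥0∞) * ∏ i, Ts i with hTdef
  have hTtop : T ≠ ⊤ := by
    apply ENNReal.mul_ne_top (ENNReal.natCast_ne_top n)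
    exact (ENNReal.prod_lt_top fun i _ => (hTne i).lt_top).ne
  have hmain : ∀ u : EuclideanSpace ℝ (Fin n),
      ∑' k : Fin n → ℤ,
        ENNReal.ofReal (|prodKernel χs (u - intNodes k)| * ‖u - intNodes k‖ ^ β) ≤ T := by
    intro u
    calc ∑' k : Fin n → ℤ,
          ENNReal.ofReal (|prodKernel χs (u - intNodes k)| * ‖u - intNodes k‖ ^ β)
        ≤ ∑' k : Fin n → ℤ, (n : ℝ≥0∞) * ∏ i, ENNReal.ofReal (c i (u i - k i)) :=
          ENNReal.tsum_le_tsum (hkey u)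
      _ = (n : ℝ≥0∞) * ∑' k : Fin n → ℤ, ∏ i, ENNReal.ofReal (c i (u i - k i)) :=
          ENNReal.tsum_mul_left
      _ = (n : ℝ≥0∞) * ∏ i, ∑' m : ℤ, ENNReal.ofReal (c i (u i - m)) := by
          rw [myENNRealTsumPiProd (fun i m => ENNReal.ofReal (c i (u i - m)))]
      _ ≤ T := mul_le_mul_right (Finset.prod_le_prod' fun i _ => hTs i (u i)) _
  have hnonneg : ∀ (u : EuclideanSpace ℝ (Fin n)) (k : Fin n → ℤ),
      0 ≤ |prodKernel χs (u - intNodes k)| * ‖u - intNodes k‖ ^ β :=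
    fun u k => mul_nonneg (abs_nonneg _) (Real.rpow_nonneg (norm_nonneg _) _)
  refine ⟨hInt, hbdd, hK2', β, hβpos', ?_, T.toReal, ?_⟩
  · intro u
    have hne : (∑' k : Fin n → ℤ,
        ENNReal.ofReal (|prodKernel χs (u - intNodes k)| * ‖u - intNodes k‖ ^ β)) ≠ ⊤ :=
      (lt_of_le_of_lt (hmain u) hTtop.lt_top).ne
    exact (ENNReal.summable_toReal hne).congr fun k => ENNReal.toReal_ofReal (hnonneg u k)
  · intro u
    have h1 : (∑' k : Fin n → ℤ, |prodKernel χs (u - intNodes k)| * ‖u - intNodes k‖ ^ β)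
        = (∑' k : Fin n → ℤ,
            ENNReal.ofReal (|prodKernel χs (u - intNodes k)| * ‖u - intNodes k‖ ^ β)).toReal := by
      rw [ENNReal.tsum_toReal_eq (fun k => ENNReal.ofReal_ne_top)]
      exact tsum_congr fun k => (ENNReal.toReal_ofReal (hnonneg u k)).symm
    rw [h1]
    exact ENNReal.toReal_mono hTtop (hmain u)
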